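/- Let (G,∘) and (N,·) be finite groups of the same order. Let e(G,N) be the number of group operations ⋆ on G such that (G,⋆,∘) is a skew brace with (G,⋆) isomorphic to (N,·) as groups, and let f(G,N) be the number of group operations ∘' on N such that (N,·,∘') is a skew brace with (N,∘') isomorphic to (G,∘) as groups. Then |Aut(N,·)| · e(G,N) = |Aut(G,∘)| · f(G,N). -/

import Mathlib

def IsSkewBrace {G : Type*} (dot circ : Group G) : Prop :=
  ∀ σ τ κ : G,
    circ.mul σ (dot.mul τ κ) =
      dot.mul (dot.mul (circ.mul σ τ) (dot.inv σ)) (circ.mul σ κ)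

def gammaFun {G : Type*} (dot circ : Group G) (σ τ : G) : G :=
  dot.mul (dot.inv σ) (circ.mul σ τ)

def IsSubgroupOf {G : Type*} (S : Group G) (H : Set G) : Prop :=
  S.one ∈ H ∧ (∀ a ∈ H, ∀ b ∈ H, S.mul a b ∈ H) ∧ (∀ a ∈ H, S.inv a ∈ H)

def IsLeftIdeal {G : Type*} (dot circ : Group G) (H : Set G) : Prop :=
  IsSubgroupOf dot H ∧ ∀ σ : G, ∀ τ ∈ H, gammaFun dot circ σ τ ∈ H

def IsStrongLeftIdeal {G : Type*} (dot circ : Group G) (H : Set G) : Prop :=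
  IsLeftIdeal dot circ H ∧
    ∀ σ : G, ∀ τ ∈ H, dot.mul (dot.mul σ τ) (dot.inv σ) ∈ H

def IsCharacteristicSubgroupOf {G : Type*} (S : Group G) (H : Set G) : Prop :=
  IsSubgroupOf S H ∧
    ∀ f : G ≃ G, (∀ a b : G, f (S.mul a b) = S.mul (f a) (f b)) → ∀ a ∈ H, f a ∈ H

def oppGroup {G : Type*} (dot : Group G) : Group G :=
  letI := dot
  { mul := fun a b => b * a
    one := (1 : G)
    inv := fun a => a⁻¹
    div := fun a b => b⁻¹ * a
    div_eq_mul_inv := fun _ _ => rfl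
    npow := fun n x => @npowRec G ⟨(1 : G)⟩ ⟨fun a b => b * a⟩ n x
    zpow := fun n x => @zpowRec G ⟨(1 : G)⟩ ⟨fun a b => b * a⟩ ⟨fun a => a⁻¹⟩
      (@npowRec G ⟨(1 : G)⟩ ⟨fun a b => b * a⟩) n x
    mul_assoc := fun a b c => (mul_assoc c b a).symm
    one_mul := fun a => mul_one a
    mul_one := fun a => one_mul a
    inv_mul_cancel := fun a => mul_inv_cancel a }

def lam {G : Type*} (S : Group G) (σ : G) : Equiv.Perm G :=
  letI := S; Equiv.mulLeft σ

def rho {G : Type*} (S : Group G) (σ : G) : Equiv.Perm G :=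
  letI := S; Equiv.mulRight σ⁻¹

/-!
Transporting the multiplication of `(N,·)` along a bijection `f : G ≃ N` gives a group
structure `f*(·)` on `G` isomorphic to `(N,·)`, and every such structure arises from exactly
`|Aut(N,·)|` bijections. Hence `|Aut(N,·)| · e(G,N)` counts the bijections `f : G ≃ N` for which
`(G, f*(·), ∘)` is a skew brace. Transporting back along `f`, this holds iff
`(N, ·, (f⁻¹)*(∘))` is a skew brace, so `f ↦ f⁻¹` identifies these bijections with the ones
counted by `|Aut(G,∘)| · f(G,N)`.
-/

namespace Byott

variable {G N : Type*}

def IsGroupIso (S : Group G) (T : Group N) (f : G ≃ N) : Prop :=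
  ∀ a b, f (S.mul a b) = T.mul (f a) (f b)

theorem IsGroupIso.symm {S : Group G} {T : Group N} {f : G ≃ N} (hf : IsGroupIso S T f) :
    IsGroupIso T S f.symm := fun a b => f.injective <| by
  rw [hf, Equiv.apply_symm_apply, Equiv.apply_symm_apply, Equiv.apply_symm_apply]

theorem IsGroupIso.trans {K : Type*} {S : Group G} {T : Group N} {U : Group K} {f : G ≃ N}
    {g : N ≃ K} (hf : IsGroupIso S T f) (hg : IsGroupIso T U g) :
    IsGroupIso S U (f.trans g) := fun a b => by
  simp only [Equiv.trans_apply, hf a b, hg (f a) (f b)]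

abbrev pullGroup (T : Group N) (f : G ≃ N) : Group G :=
  letI := T; f.group

theorem pullGroup_mul (T : Group N) (f : G ≃ N) (a b : G) :
    (pullGroup T f).mul a b = f.symm (T.mul (f a) (f b)) := rfl

theorem pullGroup_inv (T : Group N) (f : G ≃ N) (a : G) :
    (pullGroup T f).inv a = f.symm (T.inv (f a)) := rfl

theorem isGroupIso_pullGroup (T : Group N) (f : G ≃ N) : IsGroupIso (pullGroup T f) T f :=
  fun a b => by rw [pullGroup_mul, Equiv.apply_symm_apply]

theorem pullGroup_eq_iff {S : Group G} {T : Group N} {f : G ≃ N} :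
    pullGroup T f = S ↔ IsGroupIso S T f := by
  refine ⟨fun h => h ▸ isGroupIso_pullGroup T f, fun hf => Group.ext ?_⟩
  funext a b
  change (pullGroup T f).mul a b = S.mul a b
  rw [pullGroup_mul, ← hf, Equiv.symm_apply_apply]

theorem isSkewBrace_pullGroup_iff (circ : Group G) (dot : Group N) (f : G ≃ N) :
    IsSkewBrace (pullGroup dot f) circ ↔ IsSkewBrace dot (pullGroup circ f.symm) := by
  constructor
  · intro h σ τ κ
    have := congrArg f (h (f.symm σ) (f.symm τ) (f.symm κ))
    simpa [pullGroup_mul, pullGroup_inv] using this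
  · intro h σ τ κ
    have := congrArg f.symm (h (f σ) (f τ) (f κ))
    simpa [pullGroup_mul, pullGroup_inv] using this

def isoEquivAut {S : Group G} {T : Group N} {f₀ : G ≃ N} (h₀ : IsGroupIso S T f₀) :
    {f // IsGroupIso S T f} ≃ {g // IsGroupIso T T g} where
  toFun f := ⟨f₀.symm.trans f, h₀.symm.trans f.2⟩
  invFun g := ⟨f₀.trans g, h₀.trans g.2⟩
  left_inv f := Subtype.ext <| Equiv.ext fun x => by simp
  right_inv g := Subtype.ext <| Equiv.ext fun x => by simp

def pullbackEquivSigma (T : Group N) (P : Group G → Prop) :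
    {f : G ≃ N // P (pullGroup T f)} ≃
      Σ S : {S : Group G // P S ∧ ∃ f, IsGroupIso S T f}, {f // IsGroupIso S.1 T f} where
  toFun f := ⟨⟨pullGroup T f.1, f.2, f.1, isGroupIso_pullGroup T f.1⟩,
    f.1, isGroupIso_pullGroup T f.1⟩
  invFun p := ⟨p.2.1, by rw [pullGroup_eq_iff.2 p.2.2]; exact p.1.2.1⟩
  left_inv _ := rfl
  right_inv p := Sigma.subtype_ext (Subtype.ext (pullGroup_eq_iff.2 p.2.2)) rfl

theorem card_aut_mul_card_isoClass (T : Group N) (P : Group G → Prop) :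
    Nat.card {g // IsGroupIso T T g} * Nat.card {S : Group G // P S ∧ ∃ f, IsGroupIso S T f} =
      Nat.card {f : G ≃ N // P (pullGroup T f)} := by
  rw [mul_comm, ← Nat.card_prod]
  exact Nat.card_congr <| ((pullbackEquivSigma T P).trans <|
    Equiv.sigmaEquivProdOfEquiv fun S => isoEquivAut S.2.2.choose_spec).symm

end Byott

theorem stmt4_general {G N : Type*}
    (circ : Group G) (dot : Group N) :
    Nat.card {f : N ≃ N // ∀ a b : N, f (dot.mul a b) = dot.mul (f a) (f b)} *
      Nat.card {star : Group G // IsSkewBrace star circ ∧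
        ∃ f : G ≃ N, ∀ a b : G, f (star.mul a b) = dot.mul (f a) (f b)} =
    Nat.card {f : G ≃ G // ∀ a b : G, f (circ.mul a b) = circ.mul (f a) (f b)} *
      Nat.card {circ' : Group N // IsSkewBrace dot circ' ∧
        ∃ f : N ≃ G, ∀ a b : N, f (circ'.mul a b) = circ.mul (f a) (f b)} := by
  calc _ = Nat.card {f : G ≃ N // IsSkewBrace (Byott.pullGroup dot f) circ} :=
        Byott.card_aut_mul_card_isoClass dot (IsSkewBrace · circ)
    _ = Nat.card {g : N ≃ G // IsSkewBrace dot (Byott.pullGroup circ g)} :=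
        Nat.card_congr <|
          (Equiv.symmEquiv G N).subtypeEquiv (Byott.isSkewBrace_pullGroup_iff circ dot)
    _ = _ := (Byott.card_aut_mul_card_isoClass circ (IsSkewBrace dot ·)).symm

/-- Byott's translation: for finite groups `(G,∘)` and `(N,·)` of the
same order, `|Aut(N,·)| · e(G,N) = |Aut(G,∘)| · f(G,N)`. -/
theorem stmt4 {G N : Type*} [Finite G] [Finite N]
    (circ : Group G) (dot : Group N) (hcard : Nat.card G = Nat.card N) :
    Nat.card {f : N ≃ N // ∀ a b : N, f (dot.mul a b) = dot.mul (f a) (f b)} *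
      Nat.card {star : Group G // IsSkewBrace star circ ∧
        ∃ f : G ≃ N, ∀ a b : G, f (star.mul a b) = dot.mul (f a) (f b)} =
    Nat.card {f : G ≃ G // ∀ a b : G, f (circ.mul a b) = circ.mul (f a) (f b)} *
      Nat.card {circ' : Group N // IsSkewBrace dot circ' ∧
        ∃ f : N ≃ G, ∀ a b : N, f (circ'.mul a b) = circ.mul (f a) (f b)} :=
  stmt4_general circ dot
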